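/- Let P, Q be probability measures on compact Ω ⊂ ℝ^d and let (f_{P,Q}, g_{P,Q}) be continuous bounded functions on Ω with ∫∫ exp(f_{P,Q}(x)+g_{P,Q}(y)−½‖x−y‖²) dP(x)dQ(y) = 1 satisfying the Schrödinger optimality conditions ∫ exp(f_{P,Q}(x)+g_{P,Q}(y)−½‖x−y‖²) dQ(y) = 1 for P-a.e. x and ∫ exp(f_{P,Q}(x)+g_{P,Q}(y)−½‖x−y‖²) dP(x) = 1 for Q-a.e. y. Then for any continuous f, g on Ω with ∫∫ exp(f(x)+g(y)−½‖x−y‖²) dP(x)dQ(y) = 1, writing h(x,y)=f(x)+g(y) and h_{P,Q}(x,y)=f_{P,Q}(x)+g_{P,Q}(y), and dπ_{P,Q} = exp(h_{P,Q}−½‖x−y‖²)dPdQ: |S₁(P,Q) − ∫h dP dQ − ½∫(h−h_{P,Q})² dπ_{P,Q}| ≤ (1/6)‖h−h_{P,Q}‖_∞³ e^{‖h−h_{P,Q}‖_∞}, where S₁(P,Q) = ∫h_{P,Q} dP dQ. -/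

import Mathlib

/-!
Write `h = h_{P,Q} + u` and `π = e^{h_{P,Q} - ½‖x - y‖²} (P ⊗ Q)`. The normalisation of `h` says
`E_π[e^u] = 1`, and the Schrödinger conditions say that `π` is a probability measure with
marginals `P` and `Q`, so `E_π[u] = ∫ (h - h_{P,Q}) d(P ⊗ Q)` for the separable function `u`.
Hence the quantity to bound is `-E_π[e^u - 1 - u - u²/2]`, and the cubic Taylor remainder of
`exp` bounds it.
-/

open MeasureTheory Real Finset

theorem Real.abs_exp_sub_sum_range_le (x : ℝ) (n : ℕ) :
    |exp x - ∑ m ∈ range n, x ^ m / m.factorial| ≤ |x| ^ n / n.factorial * exp |x| := by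
  have hexp (y : ℝ) : HasSum (fun m : ℕ => y ^ m / m.factorial) (exp y) := by
    rw [Real.exp_eq_exp_ℝ]; exact NormedSpace.expSeries_div_hasSum_exp y
  refine ((hasSum_nat_add_iff' n).2 (hexp x)).norm_le_of_bounded
    ((hexp |x|).mul_left (|x| ^ n / n.factorial)) fun k => ?_
  have hfact : (n.factorial * k.factorial : ℝ) ≤ (k + n).factorial := by
    rw [add_comm]
    exact_mod_cast Nat.le_of_dvd (Nat.factorial_pos _)
      (Nat.factorial_mul_factorial_dvd_factorial_add n k)
  rw [Real.norm_eq_abs, abs_div, abs_pow, Nat.abs_cast, pow_add, div_mul_div_comm,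
    mul_comm (|x| ^ k)]
  gcongr

theorem Real.abs_exp_sub_one_sub_id_sub_sq_div_two_le (x : ℝ) :
    |exp x - 1 - x - x ^ 2 / 2| ≤ |x| ^ 3 / 6 * exp |x| := by
  simpa [sum_range_succ, Nat.factorial, sub_sub] using Real.abs_exp_sub_sum_range_le x 3

theorem Continuous.integrable_of_ae_mem_isCompact {X E : Type*} [TopologicalSpace X] [T2Space X]
    [MeasurableSpace X] [OpensMeasurableSpace X] [NormedAddCommGroup E] {μ : Measure X}
    [IsFiniteMeasure μ] {K : Set X} {F : X → E} (hF : Continuous F) (hK : IsCompact K)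
    (hμ : ∀ᵐ x ∂μ, x ∈ K) : Integrable F μ := by
  rw [← Measure.restrict_eq_self_of_ae_mem hμ]
  exact hF.continuousOn.integrableOn_compact hK

theorem IsCompact.le_biSup_biSup {X Y : Type*} [TopologicalSpace X] [TopologicalSpace Y]
    {K : Set X} {L : Set Y} (hK : IsCompact K) (hL : IsCompact L) {F : X → Y → ℝ}
    (hF : ContinuousOn (Function.uncurry F) (K ×ˢ L)) {x : X} {y : Y} (hx : x ∈ K)
    (hy : y ∈ L) : F x y ≤ ⨆ x ∈ K, ⨆ y ∈ L, F x y := by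
  obtain ⟨C, hC⟩ := (hK.prod hL).bddAbove_image hF
  have hle : ∀ x ∈ K, ∀ y ∈ L, F x y ≤ max C 0 := fun x hx y hy =>
    (hC ⟨(x, y), ⟨hx, hy⟩, rfl⟩).trans (le_max_left _ _)
  have hinner : F x y ≤ ⨆ y ∈ L, F x y := by
    refine le_ciSup₂ (f := fun y (_ : y ∈ L) => F x y) ⟨max C 0, ?_⟩ y hy
    rintro _ ⟨_, ⟨y', rfl⟩, hy', rfl⟩
    exact hle x hx y' hy'
  refine hinner.trans (le_ciSup₂ (f := fun x (_ : x ∈ K) => ⨆ y ∈ L, F x y) ⟨max C 0, ?_⟩ x hx)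
  rintro _ ⟨_, ⟨x', rfl⟩, hx', rfl⟩
  exact Real.iSup_le (fun y' => Real.iSup_le (hle x' hx' y') (le_max_right _ _)) (le_max_right _ _)

section Marginals

variable {X Y : Type*} [MeasurableSpace X] [MeasurableSpace Y] {P : Measure X} {Q : Measure Y}
  [SFinite P] [SFinite Q] {φ : X × Y → ℝ}

theorem integral_comp_fst_mul_of_ae_integral_eq_one (hφ : ∀ᵐ x ∂P, ∫ y, φ (x, y) ∂Q = 1)
    {a : X → ℝ} (ha : Integrable (fun z => a z.1 * φ z) (P.prod Q)) :
    ∫ z, a z.1 * φ z ∂(P.prod Q) = ∫ x, a x ∂P := by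
  rw [integral_prod _ ha]
  refine integral_congr_ae (hφ.mono fun x hx => ?_)
  simp only [integral_const_mul, hx, mul_one]

theorem integral_comp_snd_mul_of_ae_integral_eq_one (hφ : ∀ᵐ y ∂Q, ∫ x, φ (x, y) ∂P = 1)
    {b : Y → ℝ} (hb : Integrable (fun z => b z.2 * φ z) (P.prod Q)) :
    ∫ z, b z.2 * φ z ∂(P.prod Q) = ∫ y, b y ∂Q := by
  rw [integral_prod_symm _ hb]
  refine integral_congr_ae (hφ.mono fun y hy => ?_)
  simp only [integral_const_mul, hy, mul_one]

theorem integral_comp_fst_add_comp_snd_mul_of_marginals (hφ₁ : ∀ᵐ x ∂P, ∫ y, φ (x, y) ∂Q = 1)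
    (hφ₂ : ∀ᵐ y ∂Q, ∫ x, φ (x, y) ∂P = 1) {a : X → ℝ} {b : Y → ℝ}
    (ha : Integrable (fun z => a z.1 * φ z) (P.prod Q))
    (hb : Integrable (fun z => b z.2 * φ z) (P.prod Q)) :
    ∫ z, (a z.1 + b z.2) * φ z ∂(P.prod Q) = ∫ x, a x ∂P + ∫ y, b y ∂Q := by
  simp only [add_mul]
  rw [integral_add ha hb, integral_comp_fst_mul_of_ae_integral_eq_one hφ₁ ha,
    integral_comp_snd_mul_of_ae_integral_eq_one hφ₂ hb]

end Marginals

theorem integral_integral_add_of_isProbabilityMeasure {X Y : Type*} [MeasurableSpace X]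
    [MeasurableSpace Y] {P : Measure X} {Q : Measure Y} [IsProbabilityMeasure P]
    [IsProbabilityMeasure Q] {a : X → ℝ} {b : Y → ℝ} (ha : Integrable a P) (hb : Integrable b Q) :
    ∫ x, ∫ y, (a x + b y) ∂Q ∂P = ∫ x, a x ∂P + ∫ y, b y ∂Q := by
  simp only [integral_add (integrable_const _) hb, integral_const, probReal_univ, one_smul]
  rw [integral_add ha (integrable_const _), integral_const, probReal_univ, one_smul]

theorem abs_integral_mul_add_half_integral_sq_mul_le {α : Type*} [MeasurableSpace α]
    {μ : Measure α} {u φ : α → ℝ} {M : ℝ} (hu : AEStronglyMeasurable u μ)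
    (huM : ∀ᵐ z ∂μ, |u z| ≤ M) (hφ : Integrable φ μ) (hφ₀ : ∀ᵐ z ∂μ, 0 ≤ φ z)
    (hφ₁ : ∫ z, φ z ∂μ = 1) (hexp : ∫ z, exp (u z) * φ z ∂μ = 1) :
    |∫ z, u z * φ z ∂μ + 1 / 2 * ∫ z, u z ^ 2 * φ z ∂μ| ≤ M ^ 3 / 6 * exp M := by
  have hint {v : α → ℝ} (hv : AEStronglyMeasurable v μ) (C : ℝ) (hvC : ∀ᵐ z ∂μ, |v z| ≤ C) :
      Integrable (fun z => v z * φ z) μ := hφ.bdd_mul hv hvC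
  have hexp_int := hint (continuous_exp.comp_aestronglyMeasurable hu) (exp M) <|
    huM.mono fun z hz => by rw [abs_exp]; exact exp_le_exp.2 ((le_abs_self _).trans hz)
  have hlin_int := hint hu M huM
  have hsq_int := hint (v := fun z => u z ^ 2) (hu.pow 2) (M ^ 2) <| huM.mono fun z hz => by
    rw [abs_pow]; exact pow_le_pow_left₀ (abs_nonneg _) hz 2
  have hremainder : ∫ z, (exp (u z) - 1 - u z - u z ^ 2 / 2) * φ z ∂μ
      = -(∫ z, u z * φ z ∂μ + 1 / 2 * ∫ z, u z ^ 2 * φ z ∂μ) := by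
    have hsplit : (fun z => (exp (u z) - 1 - u z - u z ^ 2 / 2) * φ z)
        = fun z => (exp (u z) * φ z - φ z) - (u z * φ z + 1 / 2 * (u z ^ 2 * φ z)) := by
      ext z; ring
    rw [hsplit, integral_sub, integral_sub hexp_int hφ, integral_add hlin_int
      (hsq_int.const_mul _), integral_const_mul, hexp, hφ₁, sub_self, zero_sub]
    · exact hexp_int.sub hφ
    · exact hlin_int.add (hsq_int.const_mul _)
  rw [← abs_neg, ← hremainder, ← Real.norm_eq_abs]
  calc ‖∫ z, (exp (u z) - 1 - u z - u z ^ 2 / 2) * φ z ∂μ‖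
      ≤ ∫ z, M ^ 3 / 6 * exp M * φ z ∂μ := by
        refine norm_integral_le_of_norm_le (hφ.const_mul _) ?_
        filter_upwards [huM, hφ₀] with z hz hz₀
        have hM : 0 ≤ M := (abs_nonneg _).trans hz
        rw [Real.norm_eq_abs, abs_mul, abs_of_nonneg hz₀]
        gcongr
        exact (Real.abs_exp_sub_one_sub_id_sub_sq_div_two_le _).trans (by gcongr)
    _ = M ^ 3 / 6 * exp M := by rw [integral_const_mul, hφ₁, mul_one]

theorem entropic_cost_quadratic_expansion_general (d : ℕ)
    (Ω : Set (EuclideanSpace ℝ (Fin d))) (hΩ : IsCompact Ω)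
    (P Q : Measure (EuclideanSpace ℝ (Fin d)))
    [IsProbabilityMeasure P] [IsProbabilityMeasure Q]
    (hP : P Ωᶜ = 0) (hQ : Q Ωᶜ = 0)
    (fP gQ : EuclideanSpace ℝ (Fin d) → ℝ)
    (hfP : Continuous fP) (hgQ : Continuous gQ)
    (hopt1 : ∀ᵐ x ∂P, ∫ y, exp (fP x + gQ y - ‖x - y‖ ^ 2 / 2) ∂Q = 1)
    (hopt2 : ∀ᵐ y ∂Q, ∫ x, exp (fP x + gQ y - ‖x - y‖ ^ 2 / 2) ∂P = 1)
    (f g : EuclideanSpace ℝ (Fin d) → ℝ) (hf : Continuous f) (hg : Continuous g)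
    (hnorm : ∫ x, (∫ y, exp (f x + g y - ‖x - y‖ ^ 2 / 2) ∂Q) ∂P = 1) :
    |(∫ x, (∫ y, (fP x + gQ y) ∂Q) ∂P)
        - (∫ x, (∫ y, (f x + g y) ∂Q) ∂P)
        - (1 / 2) * ∫ x, (∫ y,
            (f x + g y - (fP x + gQ y)) ^ 2
              * exp (fP x + gQ y - ‖x - y‖ ^ 2 / 2) ∂Q) ∂P|
      ≤ (1 / 6) * (⨆ x ∈ Ω, ⨆ y ∈ Ω, |f x + g y - (fP x + gQ y)|) ^ 3
          * exp (⨆ x ∈ Ω, ⨆ y ∈ Ω, |f x + g y - (fP x + gQ y)|) := by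
  set φ := fun z : EuclideanSpace ℝ (Fin d) × EuclideanSpace ℝ (Fin d) =>
    exp (fP z.1 + gQ z.2 - ‖z.1 - z.2‖ ^ 2 / 2) with hφ
  set u := fun z : EuclideanSpace ℝ (Fin d) × EuclideanSpace ℝ (Fin d) =>
    f z.1 + g z.2 - (fP z.1 + gQ z.2) with hu
  have hΩΩ : ∀ᵐ z ∂(P.prod Q), z ∈ Ω ×ˢ Ω :=
    mem_ae_iff.2 (Measure.measure_prod_compl_eq_zero hP hQ)
  have hint {F : EuclideanSpace ℝ (Fin d) × EuclideanSpace ℝ (Fin d) → ℝ} (hF : Continuous F) :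
      Integrable F (P.prod Q) := hF.integrable_of_ae_mem_isCompact (hΩ.prod hΩ) hΩΩ
  have hintP {a : EuclideanSpace ℝ (Fin d) → ℝ} (ha : Continuous a) : Integrable a P :=
    ha.integrable_of_ae_mem_isCompact hΩ (mem_ae_iff.2 hP)
  have hintQ {b : EuclideanSpace ℝ (Fin d) → ℝ} (hb : Continuous b) : Integrable b Q :=
    hb.integrable_of_ae_mem_isCompact hΩ (mem_ae_iff.2 hQ)
  have hφ₁ : ∫ z, φ z ∂(P.prod Q) = 1 := by
    simpa using integral_comp_fst_mul_of_ae_integral_eq_one (a := 1) hopt1 (hint (by fun_prop))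
  have hexp : ∫ z, exp (u z) * φ z ∂(P.prod Q) = 1 := by
    rw [integral_prod _ (hint (F := fun z => exp (u z) * φ z) (by fun_prop)), ← hnorm]
    congr 1 with x; congr 1 with y
    rw [hu, hφ, ← exp_add]
    ring_nf
  have hlin : ∫ z, u z * φ z ∂(P.prod Q)
      = (∫ x, ∫ y, (f x + g y) ∂Q ∂P) - ∫ x, ∫ y, (fP x + gQ y) ∂Q ∂P := by
    rw [integral_integral_add_of_isProbabilityMeasure (hintP hf) (hintQ hg),
      integral_integral_add_of_isProbabilityMeasure (hintP hfP) (hintQ hgQ),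
      ← integral_comp_fst_add_comp_snd_mul_of_marginals (φ := φ) hopt1 hopt2 (a := f) (b := g)
        (hint (by fun_prop)) (hint (by fun_prop)),
      ← integral_comp_fst_add_comp_snd_mul_of_marginals (φ := φ) hopt1 hopt2 (a := fP) (b := gQ)
        (hint (by fun_prop)) (hint (by fun_prop)),
      ← integral_sub (hint (by fun_prop)) (hint (by fun_prop))]
    congr 1 with z
    ring
  have hquad : ∫ x, ∫ y, (f x + g y - (fP x + gQ y)) ^ 2
        * exp (fP x + gQ y - ‖x - y‖ ^ 2 / 2) ∂Q ∂P = ∫ z, u z ^ 2 * φ z ∂(P.prod Q) :=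
    (integral_prod _ (hint (F := fun z => u z ^ 2 * φ z) (by fun_prop))).symm
  have huM : ∀ᵐ z ∂(P.prod Q), |u z| ≤ ⨆ x ∈ Ω, ⨆ y ∈ Ω, |f x + g y - (fP x + gQ y)| :=
    hΩΩ.mono fun z hz => hΩ.le_biSup_biSup hΩ
      (F := fun x y => |f x + g y - (fP x + gQ y)|) (by fun_prop) hz.1 hz.2
  calc _ = |∫ z, u z * φ z ∂(P.prod Q) + 1 / 2 * ∫ z, u z ^ 2 * φ z ∂(P.prod Q)| := by
        rw [hlin, hquad, ← abs_neg]; ring_nf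
    _ ≤ _ := abs_integral_mul_add_half_integral_sq_mul_le (by fun_prop) huM (hint (by fun_prop))
        (ae_of_all _ fun z => (exp_pos _).le) hφ₁ hexp
    _ = _ := by ring

/-- Second-order expansion of the entropic transport cost: for any normalized dual
pair `h = f ⊕ g`, `|S₁(P,Q) − ∫h dPdQ − ½∫(h−h_{P,Q})² dπ_{P,Q}|
≤ (1/6)‖h−h_{P,Q}‖_∞³ e^{‖h−h_{P,Q}‖_∞}`, where `S₁(P,Q) = ∫ h_{P,Q} dPdQ`. -/
theorem entropic_cost_quadratic_expansion (d : ℕ)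
    (Ω : Set (EuclideanSpace ℝ (Fin d))) (hΩ : IsCompact Ω)
    (P Q : Measure (EuclideanSpace ℝ (Fin d)))
    [IsProbabilityMeasure P] [IsProbabilityMeasure Q]
    (hP : P Ωᶜ = 0) (hQ : Q Ωᶜ = 0)
    (fP gQ : EuclideanSpace ℝ (Fin d) → ℝ)
    (hfP : Continuous fP) (hgQ : Continuous gQ)
    (κ : ℝ) (hfPbd : ∀ x, |fP x| ≤ κ) (hgQbd : ∀ y, |gQ y| ≤ κ)
    (hnormPQ : ∫ x, (∫ y, exp (fP x + gQ y - ‖x - y‖ ^ 2 / 2) ∂Q) ∂P = 1)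
    (hopt1 : ∀ᵐ x ∂P, ∫ y, exp (fP x + gQ y - ‖x - y‖ ^ 2 / 2) ∂Q = 1)
    (hopt2 : ∀ᵐ y ∂Q, ∫ x, exp (fP x + gQ y - ‖x - y‖ ^ 2 / 2) ∂P = 1)
    (f g : EuclideanSpace ℝ (Fin d) → ℝ) (hf : Continuous f) (hg : Continuous g)
    (hnorm : ∫ x, (∫ y, exp (f x + g y - ‖x - y‖ ^ 2 / 2) ∂Q) ∂P = 1) :
    |(∫ x, (∫ y, (fP x + gQ y) ∂Q) ∂P)
        - (∫ x, (∫ y, (f x + g y) ∂Q) ∂P)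
        - (1 / 2) * ∫ x, (∫ y,
            (f x + g y - (fP x + gQ y)) ^ 2
              * exp (fP x + gQ y - ‖x - y‖ ^ 2 / 2) ∂Q) ∂P|
      ≤ (1 / 6) * (⨆ x ∈ Ω, ⨆ y ∈ Ω, |f x + g y - (fP x + gQ y)|) ^ 3
          * exp (⨆ x ∈ Ω, ⨆ y ∈ Ω, |f x + g y - (fP x + gQ y)|) :=
  entropic_cost_quadratic_expansion_general d Ω hΩ P Q hP hQ fP gQ hfP hgQ hopt1 hopt2 f g hf hg
    hnorm
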